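/- For every positive integer d there is a constant C > 0, depending only on d, with the following property. Let φ be a 3SAT instance with n variables and m clauses such that every clause contains exactly 3 distinct variables and every variable occurs in exactly d clauses (so 3m = dn), and let Z := {(i,j) ∈ [m]×[n] : variable x_j occurs in clause C_i}. Fix integers 1 ≤ k ≤ m and 1 ≤ ℓ ≤ n. Let U be the uniform distribution over pairs (I,J) of a k-element subset I ⊆ [m] and an ℓ-element subset J ⊆ [n], and let D be the distribution obtained by choosing (i,j) uniformly from Z, then I uniformly among k-subsets of [m] containing i and, independently, J uniformly among ℓ-subsets of [n] containing j. Then the total variation distance satisfies ‖D − U‖ ≤ C·√(n/(kℓ)). -/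

import Mathlib

open Finset

/-- A 3SAT clause over `n` variables: three distinct variable indices together with
three negation signs.  The `t`-th literal is satisfied by an assignment `x` iff
`x (var t) ≠ neg t`. -/
structure Clause3 (n : ℕ) where
  var : Fin 3 → Fin n
  neg : Fin 3 → Bool
  inj : Function.Injective var

/-- The clause is satisfied by the (global) assignment `x`. -/
def Clause3.satBy {n : ℕ} (C : Clause3 n) (x : Fin n → Bool) : Prop :=
  ∃ t : Fin 3, x (C.var t) ≠ C.neg t

/-- The clause is satisfied by a local assignment `α` to its three variables
(indexed by position). -/
def Clause3.satLocal {n : ℕ} (C : Clause3 n) (α : Fin 3 → Bool) : Prop :=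
  ∃ t : Fin 3, α t ≠ C.neg t

instance {n : ℕ} (C : Clause3 n) (x : Fin n → Bool) : Decidable (C.satBy x) := by
  unfold Clause3.satBy; infer_instance

instance {n : ℕ} (C : Clause3 n) (α : Fin 3 → Bool) : Decidable (C.satLocal α) := by
  unfold Clause3.satLocal; infer_instance

/-- `Z`: the set of (clause index, variable index) incidence pairs of `φ`. -/
def Zset {n m : ℕ} (φ : Fin m → Clause3 n) : Finset (Fin m × Fin n) :=
  univ.filter fun p => ∃ t : Fin 3, (φ p.1).var t = p.2

/-- The value of the clause/variable game `G_φ`. -/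
noncomputable def cvVal {n m : ℕ} (φ : Fin m → Clause3 n) : ℝ :=
  ⨆ a : Fin m → Fin 3 → Bool, ⨆ b : Fin n → Bool,
    (∑ i : Fin m, ∑ t : Fin 3,
        if (φ i).satLocal (a i) ∧ a i t = b ((φ i).var t) then (1 : ℝ) else 0) /
      (3 * (m : ℝ))

/-- The winning predicate of the birthday repetition game `G_φ^{k×ℓ}`:
for all `i ∈ I` and `j ∈ J` such that variable `j` occurs in clause `i`,
Merlin₁'s assignment to clause `i` satisfies it and agrees with Merlin₂'s
bit for variable `j`. -/
def bdWin {n m : ℕ} (φ : Fin m → Clause3 n) (I : Finset (Fin m)) (J : Finset (Fin n))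
    (a : Fin m → Fin 3 → Bool) (b : Fin n → Bool) : Prop :=
  ∀ i ∈ I, ∀ j ∈ J, ∀ t : Fin 3, (φ i).var t = j →
    ((φ i).satLocal (a i) ∧ a i t = b j)

instance {n m : ℕ} (φ : Fin m → Clause3 n) (I : Finset (Fin m)) (J : Finset (Fin n))
    (a : Fin m → Fin 3 → Bool) (b : Fin n → Bool) : Decidable (bdWin φ I J a b) := by
  unfold bdWin; infer_instance

/-- The value of the birthday repetition game `G_φ^{k×ℓ}`: Arthur sends a uniformly
random `k`-subset `I` of clause indices to Merlin₁ and, independently, a uniformly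
random `ℓ`-subset `J` of variable indices to Merlin₂; their (deterministic)
strategies answer with assignments to the clauses in `I`, resp. bits for the
variables in `J`. -/
noncomputable def bdVal {n m : ℕ} (φ : Fin m → Clause3 n) (k ℓ : ℕ) : ℝ :=
  ⨆ a : Finset (Fin m) → Fin m → Fin 3 → Bool, ⨆ b : Finset (Fin n) → Fin n → Bool,
    (∑ I ∈ (univ : Finset (Fin m)).powersetCard k,
        ∑ J ∈ (univ : Finset (Fin n)).powersetCard ℓ,
          if bdWin φ I J (a I) (b J) then (1 : ℝ) else 0) /
      ((((univ : Finset (Fin m)).powersetCard k).card : ℝ) *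
        (((univ : Finset (Fin n)).powersetCard ℓ).card : ℝ))

/-- The probability that the pair `(I, J)` is produced by the correlated
distribution `D`: choose `(i,j)` uniformly from `Z`, then `I` uniformly among
`k`-subsets of `[m]` containing `i` and, independently, `J` uniformly among
`ℓ`-subsets of `[n]` containing `j`. -/
noncomputable def prD {n m : ℕ} (φ : Fin m → Clause3 n) (k ℓ : ℕ)
    (I : Finset (Fin m)) (J : Finset (Fin n)) : ℝ :=
  (∑ p ∈ Zset φ,
      if p.1 ∈ I ∧ p.2 ∈ J then
        (1 : ℝ) /
          ((((((univ : Finset (Fin m)).powersetCard k).filter fun I' => p.1 ∈ I').card : ℝ)) *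
            (((((univ : Finset (Fin n)).powersetCard ℓ).filter fun J' => p.2 ∈ J').card : ℝ)))
      else 0) / ((Zset φ).card : ℝ)

/-- The probability that the pair `(I, J)` is produced by the uniform
distribution `U` on pairs of a `k`-subset of `[m]` and an `ℓ`-subset of `[n]`. -/
noncomputable def prU (m n k ℓ : ℕ) : ℝ :=
  1 / ((((univ : Finset (Fin m)).powersetCard k).card : ℝ) *
    (((univ : Finset (Fin n)).powersetCard ℓ).card : ℝ))

/-!
`D` is the average, over the incidences `(i, j) ∈ Z`, of the product of the uniform distributions
on the `k`-sets containing `i` and on the `ℓ`-sets containing `j`. By Cauchy–Schwarz the squared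
`ℓ¹`-distance of `D` to `U` is at most the `χ²`-divergence `|Ω| · ∑ D² - 1`, where `Ω` is the
set of pairs `(I, J)`. Expanding `∑ D²` over pairs of incidences, the pair `((i, j), (i', j'))`
contributes the product of two collision factors, the first being `m / k` if `i = i'` and at
most `1` otherwise (two distinct clauses are negatively correlated in a random `k`-set), and
likewise for `j, j'`. Since a clause has `3` and a variable `d` incidences, the excess over `1`
comes from `O(|Z|)` pairs only, and `χ² ≤ (mn / kℓ + 3m / k + dn / ℓ) / |Z| = O(n / kℓ)` because
`|Z| = 3m = dn`.
-/

section SubsetCounting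

variable {α : Type*} [Fintype α] [DecidableEq α]

lemma card_powersetCard_filter_mem (a : α) {k : ℕ} (hk : 1 ≤ k) :
    #{I ∈ powersetCard k (univ : Finset α) | a ∈ I} = (Fintype.card α - 1).choose (k - 1) := by
  simpa only [singleton_subset_iff, card_singleton, card_univ] using
    card_filter_powersetCard_subset {a} univ k (subset_univ _) (by simpa using hk)

lemma card_powersetCard_filter_mem_and_mem {a b : α} (hab : a ≠ b) {k : ℕ} (hk : 2 ≤ k) :
    #{I ∈ powersetCard k (univ : Finset α) | a ∈ I ∧ b ∈ I}
      = (Fintype.card α - 2).choose (k - 2) := by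
  simpa only [insert_subset_iff, singleton_subset_iff, card_pair hab, card_univ] using
    card_filter_powersetCard_subset {a, b} univ k (subset_univ _) (by rwa [card_pair hab])

lemma card_powersetCard_filter_mem_mul_card (a : α) {k : ℕ} (hk : 1 ≤ k) :
    #{I ∈ powersetCard k (univ : Finset α) | a ∈ I} * Fintype.card α
      = #(powersetCard k (univ : Finset α)) * k := by
  have hα : 1 ≤ Fintype.card α := Fintype.card_pos_iff.2 ⟨a⟩
  have h := Nat.add_one_mul_choose_eq (Fintype.card α - 1) (k - 1)
  rw [Nat.sub_add_cancel hα, Nat.sub_add_cancel hk] at h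
  rw [card_powersetCard_filter_mem a hk, card_powersetCard, card_univ, mul_comm, h]

lemma Nat.choose_mul_choose_add_two_le_sq {C K : ℕ} (h : K ≤ C) :
    C.choose K * (C + 2).choose (K + 2) ≤ (C + 1).choose (K + 1) ^ 2 := by
  have h1 := Nat.add_one_mul_choose_eq C K
  have h2 := Nat.add_one_mul_choose_eq (C + 1) (K + 1)
  refine Nat.le_of_mul_le_mul_right ?_ (show 0 < (C + 1) * (K + 2) by positivity)
  calc C.choose K * (C + 2).choose (K + 2) * ((C + 1) * (K + 2))
      = ((C + 1) * C.choose K) * ((C + 2).choose (K + 2) * (K + 2)) := by ring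
    _ = ((C + 1).choose (K + 1) * (K + 1)) * ((C + 2) * (C + 1).choose (K + 1)) := by
        rw [h1, ← h2]
    _ = (C + 1).choose (K + 1) ^ 2 * ((K + 1) * (C + 2)) := by ring
    _ ≤ (C + 1).choose (K + 1) ^ 2 * ((C + 1) * (K + 2)) := Nat.mul_le_mul_left _ (by nlinarith)

lemma card_powersetCard_filter_mem_and_mem_mul_le {a b : α} (hab : a ≠ b) {k : ℕ}
    (hk : 1 ≤ k) (hkα : k ≤ Fintype.card α) :
    #{I ∈ powersetCard k (univ : Finset α) | a ∈ I ∧ b ∈ I} * #(powersetCard k (univ : Finset α))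
      ≤ #{I ∈ powersetCard k (univ : Finset α) | a ∈ I} ^ 2 := by
  rcases Nat.lt_or_ge k 2 with hk2 | hk2
  · have hempty : #{I ∈ powersetCard k (univ : Finset α) | a ∈ I ∧ b ∈ I} = 0 := by
      rw [card_eq_zero, filter_eq_empty_iff]
      rintro I hI ⟨haI, hbI⟩
      have := card_le_card (insert_subset haI (singleton_subset_iff.2 hbI))
      rw [card_pair hab, (mem_powersetCard.1 hI).2] at this
      omega
    simp [hempty]
  · obtain ⟨K, rfl⟩ := Nat.exists_eq_add_of_le' hk2
    obtain ⟨C, hC⟩ := Nat.exists_eq_add_of_le' (hk2.trans hkα)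
    rw [card_powersetCard_filter_mem_and_mem hab hk2, card_powersetCard_filter_mem a hk,
      card_powersetCard, card_univ, hC]
    simpa using Nat.choose_mul_choose_add_two_le_sq (by omega : K ≤ C)

end SubsetCounting

section ContainingDensity

variable {α : Type*} [Fintype α] [DecidableEq α]

noncomputable def containingDensity (k : ℕ) (a : α) (I : Finset α) : ℝ :=
  if a ∈ I then 1 / #{I' ∈ powersetCard k univ | a ∈ I'} else 0

lemma containingDensity_nonneg (k : ℕ) (a : α) (I : Finset α) : 0 ≤ containingDensity k a I := by
  unfold containingDensity; positivity

lemma containingDensity_eq {k : ℕ} (hk : 1 ≤ k) (a : α) (I : Finset α) :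
    containingDensity k a I =
      if a ∈ I then 1 / ((Fintype.card α - 1).choose (k - 1) : ℝ) else 0 := by
  rw [containingDensity, card_powersetCard_filter_mem a hk]

lemma sum_containingDensity {k : ℕ} (hk : 1 ≤ k) (hkα : k ≤ Fintype.card α) (a : α) :
    ∑ I ∈ powersetCard k univ, containingDensity k a I = 1 := by
  have hpos : 0 < #{I ∈ powersetCard k (univ : Finset α) | a ∈ I} := by
    rw [card_powersetCard_filter_mem a hk]; exact Nat.choose_pos (by omega)
  unfold containingDensity
  rw [← sum_filter, sum_const, nsmul_eq_mul, mul_one_div_cancel (by positivity)]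

lemma card_mul_sum_containingDensity_mul_le {k : ℕ} (hk : 1 ≤ k) (hkα : k ≤ Fintype.card α)
    (a b : α) :
    #(powersetCard k (univ : Finset α)) *
        ∑ I ∈ powersetCard k univ, containingDensity k a I * containingDensity k b I
      ≤ if a = b then (Fintype.card α : ℝ) / k else 1 := by
  have hc : (0 : ℝ) < (Fintype.card α - 1).choose (k - 1) := by
    exact_mod_cast Nat.choose_pos (by omega)
  simp only [containingDensity_eq hk, ite_zero_mul_ite_zero]
  rw [← sum_filter, sum_const, nsmul_eq_mul]
  split_ifs with hab
  · subst hab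
    have hcount : ((Fintype.card α - 1).choose (k - 1) : ℝ) * Fintype.card α
        = #(powersetCard k (univ : Finset α)) * k := by
      exact_mod_cast
        card_powersetCard_filter_mem a hk ▸ card_powersetCard_filter_mem_mul_card a hk
    simp only [and_self, card_powersetCard_filter_mem a hk]
    rw [le_div_iff₀ (by positivity)]
    field_simp
    linarith
  · have hpair : (#{I ∈ powersetCard k (univ : Finset α) | a ∈ I ∧ b ∈ I} : ℝ) *
        #(powersetCard k (univ : Finset α)) ≤ ((Fintype.card α - 1).choose (k - 1) : ℝ) ^ 2 := by
      exact_mod_cast card_powersetCard_filter_mem a hk ▸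
        card_powersetCard_filter_mem_and_mem_mul_le hab hk hkα
    field_simp
    linarith

end ContainingDensity

lemma sq_sum_abs_sub_inv_card_le {ι : Type*} (s : Finset ι) (f : ι → ℝ)
    (hf : ∑ i ∈ s, f i = 1) :
    (∑ i ∈ s, |f i - 1 / #s|) ^ 2 ≤ #s * ∑ i ∈ s, f i ^ 2 - 1 := by
  have hs : (#s : ℝ) ≠ 0 := by
    rintro h
    rw [Nat.cast_eq_zero, card_eq_zero] at h
    simp [h] at hf
  have hvar : ∑ i ∈ s, (f i - 1 / #s) ^ 2 = ∑ i ∈ s, f i ^ 2 - 1 / #s := by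
    simp only [sub_sq, sum_add_distrib, sum_sub_distrib, ← sum_mul, ← mul_sum, hf, sum_const,
      nsmul_eq_mul]
    field_simp
    ring
  calc (∑ i ∈ s, |f i - 1 / #s|) ^ 2 ≤ #s * ∑ i ∈ s, |f i - 1 / #s| ^ 2 :=
        sq_sum_le_card_mul_sum_sq
    _ = #s * ∑ i ∈ s, f i ^ 2 - 1 := by
        simp only [sq_abs, hvar]
        field_simp

lemma sum_sum_sq_sum_mul {ι κ γ : Type*} (s : Finset ι) (t : Finset κ) (Z : Finset γ)
    (f : γ → ι → ℝ) (g : γ → κ → ℝ) :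
    ∑ x ∈ s, ∑ y ∈ t, (∑ p ∈ Z, f p x * g p y) ^ 2
      = ∑ p ∈ Z, ∑ q ∈ Z, (∑ x ∈ s, f p x * f q x) * (∑ y ∈ t, g p y * g q y) := by
  calc ∑ x ∈ s, ∑ y ∈ t, (∑ p ∈ Z, f p x * g p y) ^ 2
      = ∑ x ∈ s, ∑ p ∈ Z, ∑ q ∈ Z, ∑ y ∈ t, f p x * g p y * (f q x * g q y) := by
        simp only [sq, sum_mul_sum]
        refine sum_congr rfl fun x _ => ?_
        rw [sum_comm]
        exact sum_congr rfl fun p _ => sum_comm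
    _ = ∑ p ∈ Z, ∑ q ∈ Z, ∑ x ∈ s, ∑ y ∈ t, f p x * g p y * (f q x * g q y) := by
        rw [sum_comm]
        exact sum_congr rfl fun p _ => sum_comm
    _ = _ := by
        refine sum_congr rfl fun p _ => sum_congr rfl fun q _ => ?_
        rw [sum_mul_sum]
        exact sum_congr rfl fun x _ => sum_congr rfl fun y _ => by ring

lemma sum_sum_ite_eq_le {γ δ : Type*} [DecidableEq δ] (Z : Finset γ) (f : γ → δ) {r : ℕ}
    (hr : ∀ x, #{q ∈ Z | f q = x} ≤ r) {c : ℝ} (hc : 0 ≤ c) :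
    ∑ p ∈ Z, ∑ q ∈ Z, (if f p = f q then c else 0) ≤ #Z * (r * c) := by
  calc ∑ p ∈ Z, ∑ q ∈ Z, (if f p = f q then c else 0)
      = ∑ p ∈ Z, (#{q ∈ Z | f p = f q} : ℝ) * c := by
        simp only [← sum_filter, sum_const, nsmul_eq_mul]
    _ ≤ ∑ p ∈ Z, (r : ℝ) * c := by
        gcongr with p
        rw [filter_congr fun q _ => eq_comm]
        exact_mod_cast hr (f p)
    _ = #Z * (r * c) := by rw [sum_const, nsmul_eq_mul]

lemma ite_mul_ite_le {P Q : Prop} [Decidable P] [Decidable Q] {A B : ℝ}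
    (hA : 0 ≤ A) (hB : 0 ≤ B) :
    (if P then A else 1) * (if Q then B else 1)
      ≤ 1 + (if P ∧ Q then A * B else 0) + (if P then A else 0) + (if Q then B else 0) := by
  by_cases hP : P <;> by_cases hQ : Q <;> simp [hP, hQ]
  linarith

section Mixture

variable {α β : Type*} [Fintype α] [DecidableEq α] [Fintype β] [DecidableEq β]

noncomputable def mixtureDensity (Z : Finset (α × β)) (k ℓ : ℕ) (I : Finset α) (J : Finset β) :
    ℝ :=
  (∑ p ∈ Z, containingDensity k p.1 I * containingDensity ℓ p.2 J) / #Z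

variable {Z : Finset (α × β)} {k ℓ : ℕ}

lemma sum_mixtureDensity (hZ : Z.Nonempty) (hk : 1 ≤ k) (hkα : k ≤ Fintype.card α)
    (hℓ : 1 ≤ ℓ) (hℓβ : ℓ ≤ Fintype.card β) :
    ∑ x ∈ powersetCard k univ ×ˢ powersetCard ℓ univ, mixtureDensity Z k ℓ x.1 x.2 = 1 := by
  have hz : (#Z : ℝ) ≠ 0 := by exact_mod_cast hZ.card_pos.ne'
  simp only [mixtureDensity, ← sum_div, sum_product]
  rw [div_eq_one_iff_eq hz]
  calc _ = ∑ p ∈ Z, ∑ I ∈ powersetCard k univ, ∑ J ∈ powersetCard ℓ (univ : Finset β),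
          containingDensity k p.1 I * containingDensity ℓ p.2 J := by
        exact (sum_congr rfl fun _ _ => sum_comm).trans sum_comm
    _ = ∑ p ∈ Z, (1 : ℝ) := by
        refine sum_congr rfl fun p _ => ?_
        rw [← sum_mul_sum, sum_containingDensity hk hkα, sum_containingDensity hℓ hℓβ, one_mul]
    _ = #Z := by rw [sum_const, nsmul_one]

lemma card_mul_sum_sq_mixtureDensity_le {r s : ℕ} (hZ : Z.Nonempty)
    (hr : ∀ i, #{p ∈ Z | p.1 = i} ≤ r) (hs : ∀ j, #{p ∈ Z | p.2 = j} ≤ s)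
    (hk : 1 ≤ k) (hkα : k ≤ Fintype.card α) (hℓ : 1 ≤ ℓ) (hℓβ : ℓ ≤ Fintype.card β) :
    #(powersetCard k (univ : Finset α) ×ˢ powersetCard ℓ (univ : Finset β)) *
        ∑ x ∈ powersetCard k univ ×ˢ powersetCard ℓ univ, mixtureDensity Z k ℓ x.1 x.2 ^ 2
      ≤ 1 + ((Fintype.card α / k : ℝ) * (Fintype.card β / ℓ) + r * (Fintype.card α / k)
          + s * (Fintype.card β / ℓ)) / #Z := by
  set A : ℝ := Fintype.card α / k
  set B : ℝ := Fintype.card β / ℓ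
  have hA : 0 ≤ A := by positivity
  have hB : 0 ≤ B := by positivity
  have hz : (0 : ℝ) < #Z := by exact_mod_cast hZ.card_pos
  calc _ = (∑ p ∈ Z, ∑ q ∈ Z,
          (#(powersetCard k (univ : Finset α)) *
            ∑ I ∈ powersetCard k univ, containingDensity k p.1 I * containingDensity k q.1 I) *
          (#(powersetCard ℓ (univ : Finset β)) *
            ∑ J ∈ powersetCard ℓ univ, containingDensity ℓ p.2 J * containingDensity ℓ q.2 J))
          / #Z ^ 2 := by
        simp only [mixtureDensity, div_pow, ← sum_div, sum_product, sum_sum_sq_sum_mul,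
          card_product]
        rw [Nat.cast_mul, ← mul_div_assoc, mul_sum]
        refine congrArg (· / _) (sum_congr rfl fun p _ => ?_)
        rw [mul_sum]
        exact sum_congr rfl fun q _ => by ring
    _ ≤ (∑ p ∈ Z, ∑ q ∈ Z, (if p.1 = q.1 then A else 1) * (if p.2 = q.2 then B else 1))
          / #Z ^ 2 := by
        gcongr with p _ q _
        · exact mul_nonneg (Nat.cast_nonneg _) (sum_nonneg fun J _ =>
            mul_nonneg (containingDensity_nonneg ..) (containingDensity_nonneg ..))
        · exact card_mul_sum_containingDensity_mul_le hk hkα p.1 q.1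
        · exact card_mul_sum_containingDensity_mul_le hℓ hℓβ p.2 q.2
    _ ≤ (∑ p ∈ Z, ∑ q ∈ Z, (1 + (if p = q then A * B else 0) + (if p.1 = q.1 then A else 0)
          + (if p.2 = q.2 then B else 0))) / #Z ^ 2 := by
        gcongr with p _ q _
        simpa only [Prod.ext_iff] using ite_mul_ite_le hA hB
    _ ≤ (#Z * #Z + #Z * (A * B) + #Z * (r * A) + #Z * (s * B)) / #Z ^ 2 := by
        gcongr
        simp only [sum_add_distrib, sum_const, nsmul_eq_mul, mul_one]
        gcongr
        · simp
        · exact sum_sum_ite_eq_le Z Prod.fst hr hA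
        · exact sum_sum_ite_eq_le Z Prod.snd hs hB
    _ = _ := by field_simp; ring

end Mixture

lemma card_eq_card_mul_of_card_filter_eq {γ δ : Type*} [Fintype δ] [DecidableEq δ]
    (Z : Finset γ) (f : γ → δ) {r : ℕ} (h : ∀ x, #{p ∈ Z | f p = x} = r) :
    #Z = Fintype.card δ * r := by
  rw [card_eq_sum_card_fiberwise fun p _ => mem_coe.2 (mem_univ (f p)),
    sum_congr rfl fun x _ => h x, sum_const, card_univ, smul_eq_mul]

section Incidence

variable {n m : ℕ} (φ : Fin m → Clause3 n)

lemma card_Zset_filter_fst (i : Fin m) : #{p ∈ Zset φ | p.1 = i} = 3 := by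
  have : {p ∈ Zset φ | p.1 = i} = univ.image fun t => (i, (φ i).var t) := by
    ext ⟨i', j⟩
    simp only [Zset, mem_filter, mem_univ, true_and, mem_image, Prod.mk.injEq]
    constructor
    · rintro ⟨⟨t, ht⟩, rfl⟩; exact ⟨t, rfl, ht⟩
    · rintro ⟨t, rfl, ht⟩; exact ⟨⟨t, ht⟩, rfl⟩
  rw [this, card_image_of_injective _ fun t t' h => (φ i).inj (Prod.ext_iff.1 h).2, card_univ,
    Fintype.card_fin]

lemma card_Zset_filter_snd {d : ℕ}
    (hdeg : ∀ j : Fin n, #{i | ∃ t : Fin 3, (φ i).var t = j} = d) (j : Fin n) :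
    #{p ∈ Zset φ | p.2 = j} = d := by
  have : {p ∈ Zset φ | p.2 = j}
      = ({i | ∃ t : Fin 3, (φ i).var t = j} : Finset (Fin m)).image fun i => (i, j) := by
    ext ⟨i, j'⟩
    simp only [Zset, mem_filter, mem_univ, true_and, mem_image, Prod.mk.injEq]
    constructor
    · rintro ⟨h, rfl⟩; exact ⟨i, h, rfl, rfl⟩
    · rintro ⟨i, h, rfl, rfl⟩; exact ⟨h, rfl⟩
  rw [this, card_image_of_injective _ (Prod.mk_left_injective j), hdeg]

lemma card_Zset : #(Zset φ) = m * 3 := by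
  simpa using card_eq_card_mul_of_card_filter_eq _ _ (card_Zset_filter_fst φ)

lemma card_Zset_of_degree {d : ℕ}
    (hdeg : ∀ j : Fin n, #{i | ∃ t : Fin 3, (φ i).var t = j} = d) : #(Zset φ) = n * d := by
  simpa using card_eq_card_mul_of_card_filter_eq _ _ (card_Zset_filter_snd φ hdeg)

lemma prD_eq_mixtureDensity (k ℓ : ℕ) : prD φ k ℓ = mixtureDensity (Zset φ) k ℓ := by
  ext I J
  unfold prD mixtureDensity containingDensity
  congr 1
  exact sum_congr rfl fun p _ => by rw [ite_zero_mul_ite_zero, one_div_mul_one_div]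

end Incidence

lemma prU_eq_one_div_card (m n k ℓ : ℕ) :
    prU m n k ℓ =
      1 / #(powersetCard k (univ : Finset (Fin m)) ×ˢ powersetCard ℓ (univ : Finset (Fin n))) := by
  rw [prU, card_product, Nat.cast_mul]

lemma chiSq_bound_le_of_balanced {d m n k ℓ z : ℝ} (hk : 1 ≤ k) (hkm : k ≤ m) (hℓ : 1 ≤ ℓ)
    (hℓn : ℓ ≤ n) (hz3 : z = m * 3) (hzd : z = n * d) :
    (m / k * (n / ℓ) + 3 * (m / k) + d * (n / ℓ)) / z ≤ (d + 4) / 3 * (n / (k * ℓ)) := by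
  have hz : 0 < z := by linarith
  have hd : 0 ≤ d := by nlinarith
  rw [div_le_iff₀ hz]
  field_simp
  have hmk : 0 ≤ m * k := by nlinarith
  have hnℓd : 0 ≤ n * ℓ * d := mul_nonneg (mul_nonneg (by linarith) (by linarith)) hd
  nlinarith [mul_le_mul_of_nonneg_left hℓn hmk, mul_le_mul_of_nonneg_left hkm hnℓd]

/-- For every degree `d` there is a constant `C > 0`, depending only on `d`, such
that for every balanced 3SAT instance (each clause with 3 distinct variables,
each variable in exactly `d` clauses) and all `1 ≤ k ≤ m`, `1 ≤ ℓ ≤ n`, the total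
variation distance between the correlated distribution `D` and the uniform
distribution `U` on pairs `(I, J)` is at most `C·√(n/(kℓ))`. -/
theorem tv_dist_D_U_bound :
    ∀ d : ℕ, 0 < d → ∃ C : ℝ, 0 < C ∧
      ∀ (n m : ℕ) (φ : Fin m → Clause3 n),
        (∀ j : Fin n, (univ.filter fun i => ∃ t : Fin 3, (φ i).var t = j).card = d) →
        ∀ k ℓ : ℕ, 1 ≤ k → k ≤ m → 1 ≤ ℓ → ℓ ≤ n →
          (1 / 2 : ℝ) *
              ∑ I ∈ (univ : Finset (Fin m)).powersetCard k,
                ∑ J ∈ (univ : Finset (Fin n)).powersetCard ℓ,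
                  |prD φ k ℓ I J - prU m n k ℓ|
            ≤ C * Real.sqrt ((n : ℝ) / ((k : ℝ) * ℓ)) := by
  intro d _
  refine ⟨√((d + 4) / 12), by positivity, ?_⟩
  intro n m φ hdeg k ℓ hk hkm hℓ hℓn
  have hz3 := card_Zset φ
  have hzd := card_Zset_of_degree φ hdeg
  have hZ : (Zset φ).Nonempty := card_pos.1 (by omega)
  have hkm' : k ≤ Fintype.card (Fin m) := by rwa [Fintype.card_fin]
  have hℓn' : ℓ ≤ Fintype.card (Fin n) := by rwa [Fintype.card_fin]
  have htv := sq_sum_abs_sub_inv_card_le _ _ (sum_mixtureDensity hZ hk hkm' hℓ hℓn')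
  have hχ := card_mul_sum_sq_mixtureDensity_le hZ (fun i => (card_Zset_filter_fst φ i).le)
    (fun j => (card_Zset_filter_snd φ hdeg j).le) hk hkm' hℓ hℓn'
  have hbound := chiSq_bound_le_of_balanced (d := d) (m := m) (n := n) (k := k) (ℓ := ℓ)
    (z := #(Zset φ)) (by exact_mod_cast hk) (by exact_mod_cast hkm) (by exact_mod_cast hℓ)
    (by exact_mod_cast hℓn) (by exact_mod_cast hz3) (by exact_mod_cast hzd)
  simp only [Fintype.card_fin, Nat.cast_ofNat] at hχ
  rw [prD_eq_mixtureDensity, prU_eq_one_div_card, ← sum_product', ← Real.sqrt_mul (by positivity)]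
  apply Real.le_sqrt_of_sq_le
  linarith
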